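/- Let f ∈ S* (starlike) with f(z) = z + Σ_{n≥2} a_n zⁿ, fix λ > 1, and write (f(z)/z)^{-λ} = 1 + Σ_{n≥1} a_n(-λ,f) zⁿ. Then |a_l(-λ,f)| ≤ Π_{j=0}^{l-1} (2λ-j)/(j+1) = binomial(2λ, l) for l = 1, 2, ..., [λ]+1, and this is sharp for the Koebe function k(z)=z/(1-z)². -/

import Mathlib

open Metric Complex

/-- The class `S*(A,B)`. -/
def IsJanowskiStarlike (A B : ℝ) (f : ℂ → ℂ) : Prop :=
  AnalyticOn ℂ f (ball 0 1) ∧ f 0 = 0 ∧ deriv f 0 = 1 ∧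
    ∃ ω : ℂ → ℂ, AnalyticOn ℂ ω (ball 0 1) ∧ (∀ z ∈ ball (0 : ℂ) 1, ‖ω z‖ ≤ 1) ∧
      ∀ z ∈ ball (0 : ℂ) 1,
        z * deriv f z * (1 + (B : ℂ) * z * ω z) = f z * (1 + (A : ℂ) * z * ω z)

/-- `a` is the sequence of Taylor coefficients of the branch of `(f z / z) ^ (-lam)`
normalized to equal `1` at the origin. -/
def NegPowCoeff (lam : ℝ) (f : ℂ → ℂ) (a : ℕ → ℂ) : Prop :=
  ∃ h : ℂ → ℂ, AnalyticOn ℂ h (ball 0 1) ∧ h 0 = 0 ∧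
    (∀ z ∈ ball (0 : ℂ) 1, f z = z * Complex.exp (h z)) ∧
    a 0 = 1 ∧
    ∀ z ∈ ball (0 : ℂ) 1,
      HasSum (fun n : ℕ => a n * z ^ n) (Complex.exp (-(lam : ℂ) * h z))

/-!
Write `f = z e^h` and `g = e^{-λh} = ∑ aₙ zⁿ`. Starlikeness, `z f'/f = (1 + zω)/(1 - zω)` with
`|ω| ≤ 1`, becomes `z g' = ω · z (z g' - 2λ g)`. Clunie's method (Parseval's identity on the
circles `|z| = r → 1`, after splitting off the Taylor polynomial of degree `< l` of the right-hand
side) gives `∑_{n ≤ l} n² |aₙ|² ≤ ∑_{n < l} (2λ - n)² |aₙ|²`. For `n ≤ λ` the weights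
`(2λ - n)² - n²` are nonnegative, and `Cₗ = ∏_{j < l} (2λ - j)/(j + 1)` satisfies this recursion
with equality, so `|aₗ| ≤ Cₗ` for `l ≤ ⌊λ⌋ + 1` by induction. The Koebe function has `ω ≡ 1`,
where the relation reads `(1 - z) g' = -2λ g`, i.e. `(n + 1) aₙ₊₁ = (n - 2λ) aₙ`, so
`aₗ = (-1)ˡ Cₗ`.
-/

open Finset Filter Topology MeasureTheory
open scoped Real Nat NNReal

theorem eball_one_eq_ball {α : Type*} [PseudoMetricSpace α] (x : α) : eball x 1 = ball x 1 := by
  simpa using eball_coe (x := x) (ε := 1)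

theorem integral_exp_int_mul_I (m : ℤ) :
    ∫ θ in (0 : ℝ)..2 * π, exp (m * θ * I) = if m = 0 then (2 * π : ℂ) else 0 := by
  split_ifs with hm
  · simp [hm]
  · have hmI : (m : ℂ) * I ≠ 0 := by simp [hm, I_ne_zero]
    simp_rw [mul_right_comm _ _ I]
    rw [integral_exp_mul_complex hmI]
    have : (m : ℂ) * I * ((2 * π : ℝ) : ℂ) = m * (2 * π * I) := by push_cast; ring
    rw [this, exp_int_mul_two_pi_mul_I]
    simp

/-- `fourierCoeffOn` on `[a, b]` lives on `AddCircle (b - a)`, hence the period `2 * π - 0`. -/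
theorem fourier_neg_mul_circleMap_pow (k : ℤ) (r x : ℝ) (n : ℕ) :
    fourier (-k) (x : AddCircle (2 * π - 0)) * circleMap 0 r x ^ n =
      r ^ n * exp ((((n : ℤ) - k : ℤ) : ℂ) * x * I) := by
  rw [fourier_coe_apply, circleMap_zero, mul_pow, ← Complex.exp_nat_mul, mul_left_comm,
    ← Complex.exp_add]
  congr 2
  push_cast
  field_simp
  ring

def HasPowerSeriesOnUnitDisk (g : ℂ → ℂ) (c : ℕ → ℂ) : Prop :=
  ∀ z ∈ ball (0 : ℂ) 1, HasSum (fun n => c n * z ^ n) (g z)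

namespace HasPowerSeriesOnUnitDisk

variable {g G : ℂ → ℂ} {c d : ℕ → ℂ}

theorem hasFPowerSeriesOnBall (hg : HasPowerSeriesOnUnitDisk g c) :
    HasFPowerSeriesOnBall g (FormalMultilinearSeries.ofScalars ℂ c) 0 1 where
  r_le := by
    refine ENNReal.le_of_forall_pos_nnreal_lt fun r _ hr => ?_
    have hr1 : (r : ℝ) < 1 := by exact_mod_cast hr
    have hsum : HasSum (fun n => c n * (r : ℂ) ^ n) (g r) := hg _ (by simpa using hr1)
    refine FormalMultilinearSeries.le_radius_of_tendsto _ (l := 0) ?_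
    simpa [FormalMultilinearSeries.ofScalars_norm] using
      hsum.summable.tendsto_atTop_zero.norm
  r_pos := one_pos
  hasSum {y} hy := by
    simpa [FormalMultilinearSeries.ofScalars_apply_eq, mul_comm] using
      hg y (by rwa [← eball_one_eq_ball])

theorem differentiableOn (hg : HasPowerSeriesOnUnitDisk g c) :
    DifferentiableOn ℂ g (ball 0 1) :=
  eball_one_eq_ball (0 : ℂ) ▸ hg.hasFPowerSeriesOnBall.differentiableOn

theorem unique (hc : HasPowerSeriesOnUnitDisk g c) (hd : HasPowerSeriesOnUnitDisk g d) :
    c = d :=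
  FormalMultilinearSeries.ofScalars_series_injective ℂ ℂ
    (hc.hasFPowerSeriesOnBall.hasFPowerSeriesAt.eq_formalMultilinearSeries
      hd.hasFPowerSeriesOnBall.hasFPowerSeriesAt)

theorem summable_norm_mul_pow (hg : HasPowerSeriesOnUnitDisk g c) {r : ℝ} (hr0 : 0 ≤ r)
    (hr1 : r < 1) : Summable fun n => ‖c n‖ * r ^ n := by
  lift r to ℝ≥0 using hr0
  simpa [FormalMultilinearSeries.ofScalars_norm] using
    (FormalMultilinearSeries.ofScalars ℂ c).summable_norm_mul_pow
      (hg.hasFPowerSeriesOnBall.r_le.trans_lt' (by exact_mod_cast hr1))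

theorem of_differentiableOn (hg : DifferentiableOn ℂ g (ball 0 1)) :
    HasPowerSeriesOnUnitDisk g fun n => iteratedDeriv n g 0 / n ! := fun z hz => by
  simpa [div_eq_inv_mul, mul_comm, mul_left_comm] using
    Complex.hasSum_taylorSeries_on_ball hg hz

theorem deriv (hg : HasPowerSeriesOnUnitDisk g c) :
    HasPowerSeriesOnUnitDisk (_root_.deriv g) fun n => (n + 1) * c (n + 1) := by
  have hdiff := hg.differentiableOn
  rw [hg.unique (of_differentiableOn hdiff)]
  convert of_differentiableOn (hdiff.deriv isOpen_ball) using 2 with n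
  dsimp only
  rw [← iteratedDeriv_succ', Nat.factorial_succ]
  push_cast
  field_simp

theorem sub (hg : HasPowerSeriesOnUnitDisk g c) (hG : HasPowerSeriesOnUnitDisk G d) :
    HasPowerSeriesOnUnitDisk (g - G) (c - d) := fun z hz => by
  simpa [sub_mul] using (hg z hz).sub (hG z hz)

theorem const_mul (hg : HasPowerSeriesOnUnitDisk g c) (a : ℂ) :
    HasPowerSeriesOnUnitDisk (fun z => a * g z) fun n => a * c n := fun z hz => by
  simpa [mul_assoc] using (hg z hz).mul_left a

theorem pow_mul (hg : HasPowerSeriesOnUnitDisk g c) (N : ℕ) :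
    HasPowerSeriesOnUnitDisk (fun z => z ^ N * g z) fun n => if N ≤ n then c (n - N) else 0 :=
    fun z hz => by
  have hhead : ∑ i ∈ range N, (if N ≤ i then c (i - N) else 0) * z ^ i = 0 :=
    sum_eq_zero fun i hi => by simp [(mem_range.mp hi).not_ge]
  rw [← hasSum_nat_add_iff' N, hhead, sub_zero]
  simpa [pow_add, mul_comm, mul_left_comm] using (hg z hz).mul_left (z ^ N)

theorem mul_deriv (hg : HasPowerSeriesOnUnitDisk g c) :
    HasPowerSeriesOnUnitDisk (fun z => z * _root_.deriv g z) fun n => n * c n := by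
  convert hg.deriv.pow_mul 1 using 2 with z n
  · rw [pow_one]
  · rcases n with _ | n <;> simp

theorem sum_range_mul_pow (c : ℕ → ℂ) (N : ℕ) :
    HasPowerSeriesOnUnitDisk (fun z => ∑ n ∈ range N, c n * z ^ n)
      fun n => if n < N then c n else 0 := fun z _ => by
  have h : HasSum (fun n => (if n < N then c n else 0) * z ^ n)
      (∑ n ∈ range N, (if n < N then c n else 0) * z ^ n) :=
    hasSum_sum_of_ne_finset_zero fun n hn => by simp [mem_range.not.mp hn]
  rwa [sum_congr rfl fun n hn => by rw [if_pos (mem_range.mp hn)]] at h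

theorem congr (hg : HasPowerSeriesOnUnitDisk g c) (hgG : Set.EqOn g G (ball 0 1)) :
    HasPowerSeriesOnUnitDisk G c := fun z hz =>
  hgG hz ▸ hg z hz

theorem mul_mul_deriv_sub (hg : HasPowerSeriesOnUnitDisk g c) (lam : ℂ) :
    HasPowerSeriesOnUnitDisk (fun z => z * (z * _root_.deriv g z - 2 * lam * g z))
      fun n => if 1 ≤ n then ((n - 1 : ℕ) - 2 * lam) * c (n - 1) else 0 := by
  convert (hg.mul_deriv.sub (hg.const_mul (2 * lam))).pow_mul 1 using 2 with z n
  · simp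
  · split_ifs <;> simp [sub_mul]

theorem continuous_comp_circleMap (hg : HasPowerSeriesOnUnitDisk g c) {r : ℝ} (hr : |r| < 1) :
    Continuous fun θ => g (circleMap 0 r θ) :=
  hg.differentiableOn.continuousOn.comp_continuous (continuous_circleMap 0 r)
    fun θ => by simpa using hr

theorem hasSum_fourierCoeffOn (hg : HasPowerSeriesOnUnitDisk g c) {r : ℝ} (hr0 : 0 ≤ r)
    (hr1 : r < 1) (k : ℤ) :
    HasSum (fun n : ℕ => if (n : ℤ) = k then c n * r ^ n else 0)
      (fourierCoeffOn Real.two_pi_pos (fun θ => g (circleMap 0 r θ)) k) := by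
  have hmem : ∀ θ, circleMap 0 r θ ∈ ball (0 : ℂ) 1 := fun θ => by
    simpa [abs_of_nonneg hr0] using hr1
  have hterm : ∀ n : ℕ, ∫ θ in (0 : ℝ)..2 * π,
      fourier (-k) (θ : AddCircle (2 * π - 0)) • (c n * circleMap 0 r θ ^ n) =
        2 * π * (if (n : ℤ) = k then c n * r ^ n else 0) := by
    intro n
    simp_rw [smul_eq_mul, mul_left_comm _ (c n), fourier_neg_mul_circleMap_pow, ← mul_assoc,
      intervalIntegral.integral_const_mul, integral_exp_int_mul_I, sub_eq_zero]
    split_ifs <;> ring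
  have hsum := intervalIntegral.hasSum_integral_of_dominated_convergence
    (F := fun n θ => fourier (-k) (θ : AddCircle (2 * π - 0)) • (c n * circleMap 0 r θ ^ n))
    (f := fun θ => fourier (-k) (θ : AddCircle (2 * π - 0)) • g (circleMap 0 r θ))
    (μ := volume) (a := 0) (b := 2 * π)
    (fun n _ => ‖c n‖ * r ^ n)
    (fun n => (((fourier (-k)).continuous.comp continuous_quotient_mk').smul
      (continuous_const.mul ((continuous_circleMap 0 r).pow n))).aestronglyMeasurable)
    (fun n => Eventually.of_forall fun θ _ => by
      rw [norm_smul, fourier_apply, Circle.norm_coe, one_mul, norm_mul, norm_pow,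
        norm_circleMap_zero, abs_of_nonneg hr0])
    (Eventually.of_forall fun _ _ => hg.summable_norm_mul_pow hr0 hr1)
    intervalIntegrable_const
    (Eventually.of_forall fun θ _ => (hg _ (hmem θ)).const_smul _)
  simp_rw [hterm] at hsum
  have hnormalize :
      (fun n : ℕ => (1 / (2 * π - 0)) • (2 * π * if (n : ℤ) = k then c n * r ^ n else 0)) =
        fun n : ℕ => if (n : ℤ) = k then c n * r ^ n else 0 := by
    ext n
    rw [sub_zero, Complex.real_smul]
    push_cast
    field_simp
  rw [fourierCoeffOn_eq_integral, ← hnormalize]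
  exact hsum.const_smul _

theorem hasSum_sq_norm_mul_pow (hg : HasPowerSeriesOnUnitDisk g c) {r : ℝ} (hr0 : 0 ≤ r)
    (hr1 : r < 1) :
    HasSum (fun n => ‖c n‖ ^ 2 * r ^ (2 * n))
      (Real.circleAverage (fun z => ‖g z‖ ^ 2) 0 r) := by
  have hcont := hg.continuous_comp_circleMap (r := r) (by rwa [abs_of_nonneg hr0])
  obtain ⟨C, hC⟩ := (isCompact_sphere (0 : ℂ) r).exists_bound_of_continuousOn
    (hg.differentiableOn.continuousOn.mono (sphere_subset_ball hr1))
  have hL2 : MemLp (fun θ => g (circleMap 0 r θ)) 2 (volume.restrict (Set.Ioc 0 (2 * π))) :=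
    .of_bound hcont.aestronglyMeasurable C
      (Eventually.of_forall fun θ => hC _ (circleMap_mem_sphere 0 hr0 θ))
  have hnat : ∀ n : ℕ,
      fourierCoeffOn Real.two_pi_pos (fun θ => g (circleMap 0 r θ)) n = c n * r ^ n :=
    fun n => (hg.hasSum_fourierCoeffOn hr0 hr1 n).unique <| by
      convert hasSum_ite_eq n (c n * (r : ℂ) ^ n) using 2 with m
      simp only [Nat.cast_inj]
      split_ifs with h <;> simp [h]
  have hneg : ∀ k : ℤ, k < 0 →
      fourierCoeffOn Real.two_pi_pos (fun θ => g (circleMap 0 r θ)) k = 0 :=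
    fun k hk => (hg.hasSum_fourierCoeffOn hr0 hr1 k).unique <| by
      simp [show ∀ n : ℕ, (n : ℤ) ≠ k from fun n => by omega]
  have hP := hasSum_sq_fourierCoeffOn Real.two_pi_pos hL2
  rw [sub_zero, ← Nat.cast_injective.hasSum_iff fun k hk => ?_] at hP
  · rw [Real.circleAverage_def]
    convert hP using 2 with n
    rw [Function.comp_apply, hnat, norm_mul, norm_pow, Complex.norm_real, Real.norm_of_nonneg hr0,
      mul_pow, ← _root_.pow_mul, mul_comm n 2]
  · rw [hneg k (by simpa using hk), norm_zero, zero_pow two_ne_zero]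

theorem tail (hg : HasPowerSeriesOnUnitDisk g c) (N : ℕ) :
    HasPowerSeriesOnUnitDisk (fun z => ∑' n, c (n + N) * z ^ n) fun n => c (n + N) :=
    fun z hz => by
  obtain ⟨ρ, hzρ, hρ1⟩ := exists_between (mem_ball_zero_iff.mp hz)
  have hρ0 : 0 < ρ := (norm_nonneg z).trans_lt hzρ
  refine (Summable.of_norm_bounded (((summable_nat_add_iff N).mpr
    (hg.summable_norm_mul_pow hρ0.le hρ1)).mul_left (ρ ^ N)⁻¹) fun n => ?_).hasSum
  calc ‖c (n + N) * z ^ n‖ ≤ ‖c (n + N)‖ * ρ ^ n := by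
        rw [norm_mul, norm_pow]; gcongr
    _ = (ρ ^ N)⁻¹ * (‖c (n + N)‖ * ρ ^ (n + N)) := by
        rw [pow_add]; field_simp

theorem eq_sum_add_pow_mul_tail (hg : HasPowerSeriesOnUnitDisk g c) (N : ℕ) {z : ℂ}
    (hz : z ∈ ball (0 : ℂ) 1) :
    g z = ∑ n ∈ range N, c n * z ^ n + z ^ N * ∑' n, c (n + N) * z ^ n := by
  have h := ((hasSum_nat_add_iff' N).mpr (hg z hz)).unique
    (((hg.tail N) z hz).mul_left (z ^ N) |>.congr_fun fun n => by ring)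
  linear_combination h

theorem sum_sq_norm_le_of_norm_le (hg : HasPowerSeriesOnUnitDisk g c)
    (hG : HasPowerSeriesOnUnitDisk G d) (hle : ∀ z ∈ ball (0 : ℂ) 1, ‖g z‖ ≤ ‖G z‖) {N : ℕ}
    (hd : ∀ n, N ≤ n → d n = 0) :
    ∑ n ∈ range N, ‖c n‖ ^ 2 ≤ ∑ n ∈ range N, ‖d n‖ ^ 2 := by
  have hr : ∀ r ∈ Set.Ioo (0 : ℝ) 1,
      ∑ n ∈ range N, ‖c n‖ ^ 2 * r ^ (2 * n) ≤ ∑ n ∈ range N, ‖d n‖ ^ 2 * r ^ (2 * n) := by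
    rintro r ⟨hr0, hr1⟩
    have hcont : ∀ {F : ℂ → ℂ} {e : ℕ → ℂ}, HasPowerSeriesOnUnitDisk F e →
        CircleIntegrable (fun z => ‖F z‖ ^ 2) 0 r := fun hF =>
      ContinuousOn.circleIntegrable hr0.le
        ((hF.differentiableOn.continuousOn.mono (sphere_subset_ball hr1)).norm.pow 2)
    calc ∑ n ∈ range N, ‖c n‖ ^ 2 * r ^ (2 * n)
        ≤ Real.circleAverage (fun z => ‖g z‖ ^ 2) 0 r :=
          sum_le_hasSum _ (fun _ _ => by positivity) (hg.hasSum_sq_norm_mul_pow hr0.le hr1)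
      _ ≤ Real.circleAverage (fun z => ‖G z‖ ^ 2) 0 r :=
          Real.circleAverage_mono (hcont hg) (hcont hG) fun z hz => by
            gcongr
            exact hle z (sphere_subset_ball hr1 (by rwa [abs_of_pos hr0] at hz))
      _ = ∑ n ∈ range N, ‖d n‖ ^ 2 * r ^ (2 * n) :=
          (hG.hasSum_sq_norm_mul_pow hr0.le hr1).unique
            (hasSum_sum_of_ne_finset_zero fun n hn => by
              simp [hd n (by simpa using hn)])
  have hlim : ∀ e : ℕ → ℂ, Tendsto (fun r : ℝ => ∑ n ∈ range N, ‖e n‖ ^ 2 * r ^ (2 * n))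
      (𝓝[<] 1) (𝓝 (∑ n ∈ range N, ‖e n‖ ^ 2)) := fun e => by
    have hcont : Continuous fun r : ℝ => ∑ n ∈ range N, ‖e n‖ ^ 2 * r ^ (2 * n) := by fun_prop
    simpa using (hcont.tendsto 1).mono_left nhdsWithin_le_nhds
  exact le_of_tendsto_of_tendsto (hlim c) (hlim d)
    (Filter.mem_of_superset (Ioo_mem_nhdsLT zero_lt_one) hr)

end HasPowerSeriesOnUnitDisk

open HasPowerSeriesOnUnitDisk in
theorem sum_sq_norm_coeff_le_of_eq_mul {ω f g : ℂ → ℂ} {a b : ℕ → ℂ}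
    (hω : DifferentiableOn ℂ ω (ball 0 1)) (hω1 : ∀ z ∈ ball (0 : ℂ) 1, ‖ω z‖ ≤ 1)
    (hf : HasPowerSeriesOnUnitDisk f a) (hg : HasPowerSeriesOnUnitDisk g b)
    (hfg : ∀ z ∈ ball (0 : ℂ) 1, f z = ω z * g z) (N : ℕ) :
    ∑ n ∈ range N, ‖a n‖ ^ 2 ≤ ∑ n ∈ range N, ‖b n‖ ^ 2 := by
  -- With `g = P + z ^ N T`, `P` the Taylor polynomial of degree `< N`, the function
  -- `f - z ^ N ω T = ω P` has the same first `N` coefficients as `f` and `|ω P| ≤ |P|`.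
  have hF := hf.sub ((of_differentiableOn (hω.mul (hg.tail N).differentiableOn)).pow_mul N)
  have hle := sum_sq_norm_le_of_norm_le hF (sum_range_mul_pow b N) (fun z hz => ?_)
    (fun n hn => if_neg hn.not_gt)
  · calc ∑ n ∈ range N, ‖a n‖ ^ 2 = _ := sum_congr rfl fun n hn => by
          simp [(mem_range.mp hn).not_ge]
      _ ≤ _ := hle
      _ = ∑ n ∈ range N, ‖b n‖ ^ 2 := sum_congr rfl fun n hn => by simp [mem_range.mp hn]
  · have hFz : f z - z ^ N * (ω z * ∑' n, b (n + N) * z ^ n) =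
        ω z * ∑ n ∈ range N, b n * z ^ n := by
      rw [hfg z hz, hg.eq_sum_add_pow_mul_tail N hz]
      ring
    simp only [Pi.sub_apply, Pi.mul_apply, hFz, norm_mul]
    exact mul_le_of_le_one_left (norm_nonneg _) (hω1 z hz)

theorem mul_deriv_exp_eq_of_starlike {f h ω : ℂ → ℂ} (lam : ℂ)
    (hh : DifferentiableOn ℂ h (ball 0 1)) (hfh : ∀ z ∈ ball (0 : ℂ) 1, f z = z * exp (h z))
    (hf : ∀ z ∈ ball (0 : ℂ) 1, z * deriv f z * (1 - z * ω z) = f z * (1 + z * ω z))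
    {z : ℂ} (hz : z ∈ ball (0 : ℂ) 1) :
    z * deriv (fun w => exp (-lam * h w)) z =
      ω z * (z * (z * deriv (fun w => exp (-lam * h w)) z - 2 * lam * exp (-lam * h z))) := by
  have hhz := (hh.differentiableAt (isOpen_ball.mem_nhds hz)).hasDerivAt
  have hfz : deriv f z = exp (h z) + z * (exp (h z) * deriv h z) := by
    have hfh' : f =ᶠ[𝓝 z] fun w => w * exp (h w) :=
      eventually_of_mem (isOpen_ball.mem_nhds hz) hfh
    rw [hfh'.deriv_eq, ((hasDerivAt_id' z).fun_mul hhz.cexp).deriv, one_mul]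
  have hlog : z * deriv h z * (1 - z * ω z) = 2 * (z * ω z) := by
    rcases eq_or_ne z 0 with rfl | hz0
    · simp
    have := hf z hz
    rw [hfz, hfh z hz] at this
    apply mul_left_cancel₀ (mul_ne_zero hz0 (exp_ne_zero (h z)))
    linear_combination this
  rw [(hhz.const_mul (-lam)).cexp.deriv]
  linear_combination (-lam * exp (-lam * h z)) * hlog

theorem sum_sq_mul_sq_norm_le_of_mul_deriv_eq {g ω : ℂ → ℂ} {a : ℕ → ℂ} {lam : ℝ}
    (hω : DifferentiableOn ℂ ω (ball 0 1)) (hω1 : ∀ z ∈ ball (0 : ℂ) 1, ‖ω z‖ ≤ 1)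
    (ha : HasPowerSeriesOnUnitDisk g a)
    (hg : ∀ z ∈ ball (0 : ℂ) 1, z * deriv g z = ω z * (z * (z * deriv g z - 2 * lam * g z)))
    (l : ℕ) :
    ∑ n ∈ range (l + 1), (n : ℝ) ^ 2 * ‖a n‖ ^ 2 ≤
      ∑ n ∈ range l, (2 * lam - n) ^ 2 * ‖a n‖ ^ 2 := by
  have h := sum_sq_norm_coeff_le_of_eq_mul hω hω1 ha.mul_deriv (ha.mul_mul_deriv_sub lam) hg
    (l + 1)
  calc ∑ n ∈ range (l + 1), (n : ℝ) ^ 2 * ‖a n‖ ^ 2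
        = ∑ n ∈ range (l + 1), ‖(n : ℂ) * a n‖ ^ 2 :=
        sum_congr rfl fun n _ => by rw [norm_mul, Complex.norm_natCast, mul_pow]
    _ ≤ _ := h
    _ = ∑ n ∈ range l, (2 * lam - n) ^ 2 * ‖a n‖ ^ 2 := by
        rw [sum_range_succ', if_neg (by omega), norm_zero, zero_pow two_ne_zero, add_zero]
        refine sum_congr rfl fun n _ => ?_
        rw [if_pos (by omega), Nat.add_sub_cancel, norm_mul, mul_pow,
          show (n : ℂ) - 2 * lam = ((n - 2 * lam : ℝ) : ℂ) by push_cast; ring, Complex.norm_real,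
          Real.norm_eq_abs, sq_abs, ← neg_sub, neg_sq]

theorem coeff_eq_prod_of_mul_deriv_eq {g : ℂ → ℂ} {a : ℕ → ℂ} {lam : ℂ}
    (ha : HasPowerSeriesOnUnitDisk g a) (ha0 : a 0 = 1)
    (hg : ∀ z ∈ ball (0 : ℂ) 1, z * deriv g z = z * (z * deriv g z - 2 * lam * g z)) (l : ℕ) :
    a l = ∏ j ∈ range l, ((j : ℂ) - 2 * lam) / (j + 1) := by
  have hrec := ha.mul_deriv.unique ((ha.mul_mul_deriv_sub lam).congr fun z hz => (hg z hz).symm)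
  induction l with
  | zero => simp [ha0]
  | succ l ih =>
    have hl := congrFun hrec (l + 1)
    simp only [le_add_iff_nonneg_left, zero_le, if_true, Nat.add_sub_cancel] at hl
    push_cast at hl
    rw [prod_range_succ, ← ih]
    field_simp
    linear_combination hl

theorem koebe_mul_deriv_mul_one_sub {z : ℂ} (hz : z ≠ 1) :
    z * deriv (fun z => z / (1 - z) ^ 2) z * (1 - z) = z / (1 - z) ^ 2 * (1 + z) := by
  have hz' : 1 - z ≠ 0 := sub_ne_zero.mpr hz.symm
  rw [((hasDerivAt_id' z).fun_div (((hasDerivAt_id' z).const_sub 1).fun_pow 2)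
    (pow_ne_zero 2 hz')).deriv]
  field_simp
  ring

theorem sum_sq_sub_sq_mul_prod_sq (lam : ℝ) (l : ℕ) :
    ∑ n ∈ range l, ((2 * lam - n) ^ 2 - n ^ 2) * (∏ j ∈ range n, (2 * lam - j) / (j + 1)) ^ 2 =
      l ^ 2 * (∏ j ∈ range l, (2 * lam - j) / (j + 1)) ^ 2 := by
  induction l with
  | zero => simp
  | succ l ih =>
    rw [sum_range_succ, ih, prod_range_succ]
    push_cast
    field_simp
    ring

theorem prod_nonneg_of_le_floor_add_one {lam : ℝ} (hlam : 0 ≤ lam) {l : ℕ}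
    (hl : l ≤ ⌊lam⌋₊ + 1) : 0 ≤ ∏ j ∈ range l, (2 * lam - j) / (j + 1) :=
  prod_nonneg fun j hj => by
    have : (j : ℝ) ≤ lam := (Nat.le_floor_iff hlam).mp (by simp at hj; omega)
    exact div_nonneg (by linarith) (by positivity)

theorem le_prod_of_sum_sq_le {lam : ℝ} (hlam : 0 ≤ lam) {x : ℕ → ℝ} (hx : ∀ n, 0 ≤ x n)
    (hx0 : x 0 ≤ 1)
    (hsum : ∀ l, ∑ n ∈ range (l + 1), (n : ℝ) ^ 2 * x n ^ 2 ≤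
      ∑ n ∈ range l, (2 * lam - n) ^ 2 * x n ^ 2)
    {l : ℕ} (hl : l ≤ ⌊lam⌋₊ + 1) : x l ≤ ∏ j ∈ range l, (2 * lam - j) / (j + 1) := by
  induction l using Nat.strong_induction_on with
  | _ l ih =>
  rcases Nat.eq_zero_or_pos l with rfl | hl0
  · simpa using hx0
  have key : (l : ℝ) ^ 2 * x l ^ 2 ≤ l ^ 2 * (∏ j ∈ range l, (2 * lam - j) / (j + 1)) ^ 2 :=
    calc (l : ℝ) ^ 2 * x l ^ 2 ≤ ∑ n ∈ range l, ((2 * lam - n) ^ 2 - n ^ 2) * x n ^ 2 := by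
          have := hsum l
          rw [sum_range_succ] at this
          simp only [sub_mul, sum_sub_distrib]
          linarith
      _ ≤ ∑ n ∈ range l, ((2 * lam - n) ^ 2 - n ^ 2) *
            (∏ j ∈ range n, (2 * lam - j) / (j + 1)) ^ 2 := by
          refine sum_le_sum fun n hn => ?_
          have hnl := mem_range.mp hn
          have : (n : ℝ) ≤ lam := (Nat.le_floor_iff hlam).mp (by omega)
          gcongr
          · nlinarith
          · exact hx n
          · exact ih n hnl (by omega)
      _ = _ := sum_sq_sub_sq_mul_prod_sq lam l
  exact (pow_le_pow_iff_left₀ (hx l) (prod_nonneg_of_le_floor_add_one hlam hl) two_ne_zero).mp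
    (le_of_mul_le_mul_left key (by positivity))

theorem norm_prod_eq_prod_of_le_floor_add_one {lam : ℝ} (hlam : 0 ≤ lam) {l : ℕ}
    (hl : l ≤ ⌊lam⌋₊ + 1) :
    ‖∏ j ∈ range l, ((j : ℂ) - 2 * lam) / (j + 1)‖ = ∏ j ∈ range l, (2 * lam - j) / (j + 1) := by
  rw [norm_prod]
  refine prod_congr rfl fun j hj => ?_
  have : (j : ℝ) ≤ lam := (Nat.le_floor_iff hlam).mp (by simp at hj; omega)
  rw [show ((j : ℂ) - 2 * lam) / (j + 1) = (((j - 2 * lam) / (j + 1) : ℝ) : ℂ) by push_cast; rfl,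
    Complex.norm_real, Real.norm_of_nonpos (div_nonpos_of_nonpos_of_nonneg (by linarith)
      (by positivity)), ← neg_div, neg_sub]

theorem starlike_coeff_bound_large_lambda (lam : ℝ) (hlam : 1 < lam)
    (f : ℂ → ℂ) (hf : IsJanowskiStarlike 1 (-1) f)
    (a : ℕ → ℂ) (ha : NegPowCoeff lam f a) :
    (∀ l : ℕ, 1 ≤ l → l ≤ ⌊lam⌋₊ + 1 →
        ‖a l‖ ≤ ∏ j ∈ Finset.range l, (2 * lam - j) / (j + 1)) ∧
      ∀ a' : ℕ → ℂ, NegPowCoeff lam (fun z => z / (1 - z) ^ 2) a' →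
        ∀ l : ℕ, 1 ≤ l → l ≤ ⌊lam⌋₊ + 1 →
          ‖a' l‖ = ∏ j ∈ Finset.range l, (2 * lam - j) / (j + 1) := by
  have hlam0 : 0 ≤ lam := by linarith
  constructor
  · obtain ⟨-, -, -, ω, hω, hω1, hfω⟩ := hf
    obtain ⟨h, hh, -, hfh, ha0, ha⟩ := ha
    have hg := fun z (hz : z ∈ ball (0 : ℂ) 1) =>
      mul_deriv_exp_eq_of_starlike (ω := ω) lam hh.differentiableOn hfh
        (fun z hz => by have := hfω z hz; push_cast at this; linear_combination this) hz
    exact fun l _ hl => le_prod_of_sum_sq_le hlam0 (fun n => norm_nonneg _) (by simp [ha0])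
      (sum_sq_mul_sq_norm_le_of_mul_deriv_eq hω.differentiableOn hω1 ha hg) hl
  · rintro a' ⟨h, hh, -, hfh, ha0, ha⟩ l _ hl
    have hg := fun z (hz : z ∈ ball (0 : ℂ) 1) =>
      (mul_deriv_exp_eq_of_starlike (ω := fun _ => 1) lam hh.differentiableOn hfh
        (fun z hz => by simpa only [mul_one] using
          koebe_mul_deriv_mul_one_sub (ne_of_mem_of_not_mem hz (by simp))) hz).trans (one_mul _)
    rw [coeff_eq_prod_of_mul_deriv_eq ha ha0 hg, norm_prod_eq_prod_of_le_floor_add_one hlam0 hl]
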